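/- arXiv:1611.07202 — 5 statements merged into one kernel-verified Lean document; each statement's English description precedes it below -/
import Mathlib

section
/- First-order scaled delta expansion solution at n = 0: let S₀⁽¹⁾ = 7π²/18 − (2π²/3)·ln 2 + (π²/6)·ln(π²/6), and define for 0 < z < π the function Θ₀⁽¹⁾(z) = −4 + (4z²/π²)·(1 − ln 2) + (3 − 2π/z − z²/π²)·ln(1 − z/π) + (3 + 2π/z − z²/π²)·ln(1 + z/π). Then Θ₀⁽¹⁾ satisfies (π²/6)·(Θ₀⁽¹⁾'' + (2/z)·Θ₀⁽¹⁾') = (6/π²)·S₀⁽¹⁾ − ln(1 − z²/π²) − ln(π²/6) for all 0 < z < π, and the boundary conditions hold: Θ₀⁽¹⁾(z) → 0 and Θ₀⁽¹⁾'(z) → 0 as z → 0⁺, and Θ₀⁽¹⁾(z) → 0 as z → π⁻. -/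
/-!
Write `Θ = u / z`. For any `u`, `Θ'' + (2 / z) Θ' = u'' / z`, and `u = z Θ` has elementary
derivatives `u' = (10 - 12 log 2) z² / a² + 3 (1 - z² / a²) log (1 - z² / a²)` and
`u'' = (z / a²) (14 - 24 log 2 - 6 log (1 - z² / a²))`, which gives the equation (here `a = π`).
Since `u 0 = u' 0 = u'' 0 = 0`, both `Θ = u / z` and `Θ' = (z u' - u) / z²` tend to `0` at `0`
(the latter by l'Hôpital). Near `z = a` the coefficient of `log (1 - z / a)` vanishes to second
order, so `Θ` is continuous at `a`, where its value is `0`.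
-/

open Real Filter Set Topology

section RadialLaplacian

variable {u u' : ℝ → ℝ}

theorem deriv_div_id_eventuallyEq {x : ℝ} (hu : ∀ᶠ y in 𝓝 x, HasDerivAt u (u' y) y)
    (hx : x ≠ 0) :
    deriv (fun y => u y / y) =ᶠ[𝓝 x] fun y => (y * u' y - u y) / y ^ 2 := by
  filter_upwards [hu, eventually_ne_nhds hx] with y hy hy0
  exact ((hy.div (hasDerivAt_id' y) hy0).congr_deriv (by ring)).deriv

theorem deriv_deriv_div_id_add {x c : ℝ} (hx : x ≠ 0)
    (hu : ∀ᶠ y in 𝓝 x, HasDerivAt u (u' y) y) (hu' : HasDerivAt u' c x) :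
    deriv (deriv fun y => u y / y) x + 2 / x * deriv (fun y => u y / y) x = c / x := by
  have hw : HasDerivAt (fun y => y * u' y - u y) (x * c) x :=
    (((hasDerivAt_id' x).mul hu').sub hu.self_of_nhds).congr_deriv (by ring)
  have hw' : HasDerivAt (fun y => (y * u' y - u y) / y ^ 2)
      ((x * c * x ^ 2 - (x * u' x - u x) * (2 * x)) / (x ^ 2) ^ 2) x :=
    (hw.div (hasDerivAt_pow 2 x) (pow_ne_zero 2 hx)).congr_deriv (by simp)
  rw [(deriv_div_id_eventuallyEq hu hx).deriv_eq, hw'.deriv,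
    (deriv_div_id_eventuallyEq hu hx).self_of_nhds]
  field_simp
  ring

theorem tendsto_deriv_div_id_nhdsNE_zero {u'' : ℝ → ℝ} {L : ℝ}
    (hu : ∀ᶠ y in 𝓝 0, HasDerivAt u (u' y) y) (hu' : ∀ᶠ y in 𝓝 0, HasDerivAt u' (u'' y) y)
    (hu0 : u 0 = 0) (hL : Tendsto u'' (𝓝[≠] 0) (𝓝 L)) :
    Tendsto (deriv fun y => u y / y) (𝓝[≠] 0) (𝓝 (L / 2)) := by
  have hw : ∀ᶠ y in 𝓝 0, HasDerivAt (fun y => y * u' y - u y) (y * u'' y) y := by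
    filter_upwards [hu, hu'] with y hy hy'
    exact (((hasDerivAt_id' y).mul hy').sub hy).congr_deriv (by ring)
  have hw0 : Tendsto (fun y => y * u' y - u y) (𝓝[≠] 0) (𝓝 0) := by
    have := (hw.self_of_nhds.continuousAt.tendsto).mono_left (nhdsWithin_le_nhds (s := {0}ᶜ))
    simpa [hu0] using this
  have hsq : Tendsto (fun y : ℝ => y ^ 2) (𝓝[≠] 0) (𝓝 0) := by
    simpa using ((continuous_pow 2).tendsto (0 : ℝ)).mono_left nhdsWithin_le_nhds
  have hratio : Tendsto (fun y => y * u'' y / (2 * y)) (𝓝[≠] 0) (𝓝 (L / 2)) := by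
    refine (hL.div_const 2).congr' ?_
    filter_upwards [self_mem_nhdsWithin] with y (hy : y ≠ 0)
    field_simp
  have hlim := HasDerivAt.lhopital_zero_nhdsNE (nhdsWithin_le_nhds hw)
    (Eventually.of_forall fun y => by simpa using hasDerivAt_pow 2 y)
    (by filter_upwards [self_mem_nhdsWithin] with y (hy : y ≠ 0); simpa using hy) hw0 hsq hratio
  refine hlim.congr' ?_
  filter_upwards [nhdsWithin_le_nhds hu.eventually_nhds, self_mem_nhdsWithin]
    with y hy (hy0 : y ≠ 0)
  exact (deriv_div_id_eventuallyEq hy hy0).self_of_nhds.symm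

end RadialLaplacian

noncomputable section

/-- `Θ₀⁽¹⁾`, with the radius `π` replaced by an arbitrary `a`. -/
def theta1 (a z : ℝ) : ℝ :=
  -4 + 4 * z ^ 2 / a ^ 2 * (1 - log 2)
    + (3 - 2 * a / z - z ^ 2 / a ^ 2) * log (1 - z / a)
    + (3 + 2 * a / z - z ^ 2 / a ^ 2) * log (1 + z / a)

def ztheta1 (a z : ℝ) : ℝ :=
  -4 * z + 4 * z ^ 3 / a ^ 2 * (1 - log 2)
    + (3 * z - 2 * a - z ^ 3 / a ^ 2) * log (1 - z / a)
    + (3 * z + 2 * a - z ^ 3 / a ^ 2) * log (1 + z / a)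

end

variable {a z : ℝ}

theorem theta1_eventuallyEq (hz : z ≠ 0) : theta1 a =ᶠ[𝓝 z] fun y => ztheta1 a y / y := by
  filter_upwards [eventually_ne_nhds hz] with y hy
  unfold theta1 ztheta1
  field_simp

theorem hasDerivAt_ztheta1 (hz : z ∈ Ioo (-a) a) :
    HasDerivAt (ztheta1 a)
      ((10 - 12 * log 2) * z ^ 2 / a ^ 2 + 3 * (1 - z ^ 2 / a ^ 2) * log (1 - z ^ 2 / a ^ 2))
      z := by
  have ha : 0 < a := by linarith [hz.1, hz.2]
  have hm : 0 < 1 - z / a := by rw [sub_pos, div_lt_one ha]; exact hz.2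
  have hp : 0 < 1 + z / a := by
    have : -1 < z / a := by rw [lt_div_iff₀ ha]; linarith [hz.1]
    linarith
  have hlogm := (((hasDerivAt_id' z).div_const a).const_sub 1).log hm.ne'
  have hlogp := (((hasDerivAt_id' z).div_const a).const_add 1).log hp.ne'
  have hcube : HasDerivAt (fun y => y ^ 3 / a ^ 2) (3 * z ^ 2 / a ^ 2) z :=
    ((hasDerivAt_pow 3 z).div_const (a ^ 2)).congr_deriv (by norm_num)
  have hcm : HasDerivAt (fun y => 3 * y - 2 * a - y ^ 3 / a ^ 2) (3 - 3 * z ^ 2 / a ^ 2) z :=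
    ((((hasDerivAt_id' z).const_mul 3).sub_const (2 * a)).sub hcube).congr_deriv (by ring)
  have hcp : HasDerivAt (fun y => 3 * y + 2 * a - y ^ 3 / a ^ 2) (3 - 3 * z ^ 2 / a ^ 2) z :=
    ((((hasDerivAt_id' z).const_mul 3).add_const (2 * a)).sub hcube).congr_deriv (by ring)
  have hlead : HasDerivAt (fun y => 4 * y ^ 3 / a ^ 2 * (1 - log 2))
      (12 * z ^ 2 / a ^ 2 * (1 - log 2)) z :=
    ((((hasDerivAt_pow 3 z).const_mul 4).div_const _).mul_const _).congr_deriv (by push_cast; ring)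
  have hsum : HasDerivAt (ztheta1 a) _ z :=
    ((((hasDerivAt_id' z).const_mul (-4)).add hlead).add (hcm.mul hlogm)).add (hcp.mul hlogp)
  have hlog : log (1 - z ^ 2 / a ^ 2) = log (1 - z / a) + log (1 + z / a) := by
    rw [← log_mul hm.ne' hp.ne']; congr 1; ring
  refine hsum.congr_deriv ?_
  rw [hlog]
  generalize log (1 - z / a) = Lm, log (1 + z / a) = Lp
  have : a - z ≠ 0 := by linarith [hz.2]
  have : a + z ≠ 0 := by linarith [hz.1]
  field_simp
  ring

theorem hasDerivAt_ztheta1_deriv (hz : z ∈ Ioo (-a) a) :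
    HasDerivAt
      (fun y =>
        (10 - 12 * log 2) * y ^ 2 / a ^ 2 + 3 * (1 - y ^ 2 / a ^ 2) * log (1 - y ^ 2 / a ^ 2))
      (z / a ^ 2 * (14 - 24 * log 2 - 6 * log (1 - z ^ 2 / a ^ 2))) z := by
  have ha : 0 < a := by linarith [hz.1, hz.2]
  have hdiff : 0 < a ^ 2 - z ^ 2 := by nlinarith [hz.1, hz.2]
  have hq : 0 < 1 - z ^ 2 / a ^ 2 := by
    rw [sub_pos, div_lt_one (by positivity)]; linarith
  have hsq : HasDerivAt (fun y => y ^ 2 / a ^ 2) (2 * z / a ^ 2) z :=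
    ((hasDerivAt_pow 2 z).div_const (a ^ 2)).congr_deriv (by norm_num)
  have hsum := ((((hasDerivAt_pow 2 z).const_mul (10 - 12 * log 2)).div_const (a ^ 2)).add
    (((hsq.const_sub 1).const_mul 3).mul ((hsq.const_sub 1).log hq.ne')))
  refine hsum.congr_deriv ?_
  generalize log (1 - z ^ 2 / a ^ 2) = L
  have := hdiff.ne'
  field_simp
  ring

theorem theta1_radial_ode (hz : z ∈ Ioo (-a) a) (hz0 : z ≠ 0) :
    deriv (deriv (theta1 a)) z + 2 / z * deriv (theta1 a) z =
      (14 - 24 * log 2 - 6 * log (1 - z ^ 2 / a ^ 2)) / a ^ 2 := by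
  rw [(theta1_eventuallyEq hz0).deriv.deriv_eq, (theta1_eventuallyEq hz0).deriv_eq,
    deriv_deriv_div_id_add hz0
      (Eventually.mono (isOpen_Ioo.mem_nhds hz) fun y hy => hasDerivAt_ztheta1 hy)
      (hasDerivAt_ztheta1_deriv hz)]
  field_simp

theorem tendsto_theta1_nhdsNE_zero (ha : 0 < a) : Tendsto (theta1 a) (𝓝[≠] 0) (𝓝 0) := by
  have hslope : Tendsto (fun y => y⁻¹ * ztheta1 a y) (𝓝[≠] 0) (𝓝 0) := by
    simpa [ztheta1] using
      hasDerivAt_iff_tendsto_slope_zero.mp (hasDerivAt_ztheta1 (z := 0) ⟨by linarith, ha⟩)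
  refine hslope.congr' ?_
  filter_upwards [self_mem_nhdsWithin] with y (hy : y ≠ 0)
  rw [(theta1_eventuallyEq hy).self_of_nhds, inv_mul_eq_div]

theorem tendsto_deriv_theta1_nhdsNE_zero (ha : 0 < a) :
    Tendsto (deriv (theta1 a)) (𝓝[≠] 0) (𝓝 0) := by
  have hball : Ioo (-a) a ∈ 𝓝 0 := isOpen_Ioo.mem_nhds ⟨by linarith, ha⟩
  have hL : Tendsto (fun z => z / a ^ 2 * (14 - 24 * log 2 - 6 * log (1 - z ^ 2 / a ^ 2)))
      (𝓝[≠] 0) (𝓝 0) := by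
    have : ContinuousAt
        (fun z => z / a ^ 2 * (14 - 24 * log 2 - 6 * log (1 - z ^ 2 / a ^ 2))) 0 := by
      fun_prop (disch := simp)
    simpa using this.tendsto.mono_left nhdsWithin_le_nhds
  have hlim := tendsto_deriv_div_id_nhdsNE_zero
    (Eventually.mono hball fun y hy => hasDerivAt_ztheta1 hy)
    (Eventually.mono hball fun y hy => hasDerivAt_ztheta1_deriv hy) (by simp [ztheta1]) hL
  rw [zero_div] at hlim
  refine hlim.congr' ?_
  filter_upwards [self_mem_nhdsWithin] with y (hy : y ≠ 0)
  exact (theta1_eventuallyEq hy).deriv_eq.symm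

theorem tendsto_theta1_self (ha : a ≠ 0) : Tendsto (theta1 a) (𝓝 a) (𝓝 0) := by
  -- With `s = z / a`, `3 - 2 / s - s² = -(1 - s)² (2 + s) / s`: the singular term is a multiple
  -- of `(1 - s) log (1 - s)`, which is continuous at `s = 1`.
  have hml : ContinuousAt (fun z => (1 - z / a) * log (1 - z / a)) a :=
    (continuous_mul_log.comp (by fun_prop : Continuous fun z => 1 - z / a)).continuousAt
  have hg : ContinuousAt (fun z => -4 + 4 * (z / a) ^ 2 * (1 - log 2)
      - (1 - z / a) * (2 + z / a) / (z / a) * ((1 - z / a) * log (1 - z / a))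
      + (3 + 2 / (z / a) - (z / a) ^ 2) * log (1 + z / a)) a := by
    fun_prop (disch := simp [ha])
  have hcont : ContinuousAt (theta1 a) a := hg.congr <| by
    filter_upwards [eventually_ne_nhds ha] with z hz
    simp only [theta1]
    field_simp
    ring
  have hval : theta1 a a = 0 := by
    simp [theta1, ha]
    norm_num
    ring
  simpa [hval] using hcont.tendsto

/-- First-order scaled delta expansion solution at `n = 0`: the explicit function `Θ₀⁽¹⁾`
satisfies `(π²/6)·(Θ₀⁽¹⁾'' + (2/z)·Θ₀⁽¹⁾') = (6/π²)·S₀⁽¹⁾ − ln(1 − z²/π²) − ln(π²/6)`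
on `(0, π)`, with `Θ₀⁽¹⁾(z) → 0` and `Θ₀⁽¹⁾'(z) → 0` as `z → 0⁺` and `Θ₀⁽¹⁾(z) → 0`
as `z → π⁻`, where `S₀⁽¹⁾ = 7π²/18 − (2π²/3)·ln 2 + (π²/6)·ln(π²/6)`. -/
theorem scaled_delta_expansion_first_order_n0 :
    let S01 : ℝ := 7 * Real.pi ^ 2 / 18 - 2 * Real.pi ^ 2 / 3 * Real.log 2
      + Real.pi ^ 2 / 6 * Real.log (Real.pi ^ 2 / 6)
    let Θ : ℝ → ℝ := fun z =>
      -4 + 4 * z ^ 2 / Real.pi ^ 2 * (1 - Real.log 2)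
        + (3 - 2 * Real.pi / z - z ^ 2 / Real.pi ^ 2) * Real.log (1 - z / Real.pi)
        + (3 + 2 * Real.pi / z - z ^ 2 / Real.pi ^ 2) * Real.log (1 + z / Real.pi)
    (∀ z ∈ Set.Ioo (0 : ℝ) Real.pi,
      Real.pi ^ 2 / 6 * (deriv (deriv Θ) z + 2 / z * deriv Θ z) =
        6 / Real.pi ^ 2 * S01 - Real.log (1 - z ^ 2 / Real.pi ^ 2)
          - Real.log (Real.pi ^ 2 / 6)) ∧
    Filter.Tendsto Θ (nhdsWithin 0 (Set.Ioi 0)) (nhds 0) ∧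
    Filter.Tendsto (deriv Θ) (nhdsWithin 0 (Set.Ioi 0)) (nhds 0) ∧
    Filter.Tendsto Θ (nhdsWithin Real.pi (Set.Iio Real.pi)) (nhds 0) := by
  intro S01 Θ
  refine ⟨fun z hz => ?_, (tendsto_theta1_nhdsNE_zero pi_pos).mono_left (nhdsGT_le_nhdsNE 0),
    (tendsto_deriv_theta1_nhdsNE_zero pi_pos).mono_left (nhdsGT_le_nhdsNE 0),
    (tendsto_theta1_self pi_ne_zero).mono_left nhdsWithin_le_nhds⟩
  have hode := theta1_radial_ode (a := π) ⟨by linarith [hz.1, pi_pos], hz.2⟩ hz.1.ne'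
  change π ^ 2 / 6 * (deriv (deriv (theta1 π)) z + 2 / z * deriv (theta1 π) z) = _
  rw [hode]
  field_simp
  ring
end

section
/- Sign of the first-order correction about n = 0: the function Θ₀⁽¹⁾(z) = −4 + (4z²/π²)·(1 − ln 2) + (3 − 2π/z − z²/π²)·ln(1 − z/π) + (3 + 2π/z − z²/π²)·ln(1 + z/π) satisfies Θ₀⁽¹⁾(z) ≤ 0 for all z ∈ (0, π). -/
/-!
With `x = z / π` and `t = x²`, the series of `log (1 - t)` and of `log (1 + x) - log (1 - x)`
give `Θ₀⁽¹⁾(π x) = (7/3 - 4 log 2) t + ∑ₙ cₙ t ^ (n + 2)` with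
`cₙ = 3 / ((n + 1) (n + 2) (2n + 5)) > 0`. Writing the partial sums of `cₙ` through harmonic
numbers shows `∑ cₙ = 4 log 2 - 7/3`, so for `0 < t < 1` the tail is at most `t² (4 log 2 - 7/3)`
and `Θ₀⁽¹⁾(π x) ≤ (7/3 - 4 log 2) t (1 - t) ≤ 0`.
-/

open Filter Real Finset Topology

/-- `firstOrderCorrection x = Θ₀⁽¹⁾(π x)`. -/
noncomputable def firstOrderCorrection (x : ℝ) : ℝ :=
  -4 + 4 * x ^ 2 * (1 - log 2) + (3 - 2 / x - x ^ 2) * log (1 - x)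
    + (3 + 2 / x - x ^ 2) * log (1 + x)

noncomputable def correctionCoeff (n : ℕ) : ℝ := 3 / ((n + 1) * (n + 2) * (2 * n + 5))

lemma correctionCoeff_nonneg (n : ℕ) : 0 ≤ correctionCoeff n := by
  unfold correctionCoeff; positivity

lemma correctionCoeff_eq (n : ℕ) :
    correctionCoeff n = 1 / (n + 1) - 3 / (n + 2) + 4 / (2 * n + 5) := by
  unfold correctionCoeff
  field_simp
  ring

lemma sum_range_correctionCoeff (N : ℕ) :
    ∑ n ∈ range N, correctionCoeff n
      = harmonic N - 5 * harmonic (N + 1) + 4 * harmonic (2 * N + 3) - 7 / 3 := by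
  induction N with
  | zero => norm_num [harmonic_succ]
  | succ N ih =>
    rw [sum_range_succ, ih, correctionCoeff_eq, show 2 * (N + 1) + 3 = 2 * N + 3 + 1 + 1 by ring]
    simp only [harmonic_succ]
    push_cast
    field_simp
    ring

lemma tendsto_log_sub_five_mul_log_add_four_mul_log :
    Tendsto (fun N : ℕ => log N - 5 * log (N + 1) + 4 * log (2 * N + 3)) atTop
      (𝓝 (4 * log 2)) := by
  have h_ratio : Tendsto (fun N : ℕ => (N : ℝ) / (N + 1) * ((2 * N + 3) / (N + 1)) ^ 4) atTop
      (𝓝 (1 * 2 ^ 4)) := by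
    refine (tendsto_natCast_div_add_atTop 1).mul (Tendsto.pow ?_ 4)
    have := tendsto_one_div_add_atTop_nhds_zero_nat.const_add (2 : ℝ)
    rw [add_zero] at this
    refine this.congr fun N => ?_
    field_simp
    ring
  have h_log := ((continuousAt_log (by norm_num)).tendsto).comp h_ratio
  rw [one_mul, log_pow] at h_log
  push_cast at h_log
  refine h_log.congr' ?_
  filter_upwards [eventually_ge_atTop 1] with N hN
  have hN : (N : ℝ) ≠ 0 := by positivity
  simp only [Function.comp_apply]
  rw [log_mul (by positivity) (by positivity), log_pow, log_div hN (by positivity),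
    log_div (by positivity) (by positivity)]
  push_cast
  ring

lemma hasSum_correctionCoeff : HasSum correctionCoeff (4 * log 2 - 7 / 3) := by
  rw [hasSum_iff_tendsto_nat_of_nonneg correctionCoeff_nonneg]
  have hγ := tendsto_harmonic_sub_log
  have hγ₁ : Tendsto (fun N : ℕ => (harmonic (N + 1) : ℝ) - log (N + 1)) atTop
      (𝓝 eulerMascheroniConstant) := by
    refine (hγ.comp (tendsto_add_atTop_nat 1)).congr fun N => ?_
    simp
  have hγ₂ : Tendsto (fun N : ℕ => (harmonic (2 * N + 3) : ℝ) - log (2 * N + 3)) atTop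
      (𝓝 eulerMascheroniConstant) := by
    have h_lin : StrictMono fun N : ℕ => 2 * N + 3 := fun a b h => by simp only; omega
    refine (hγ.comp h_lin.tendsto_atTop).congr fun N => ?_
    simp only [Function.comp_apply]
    push_cast
    ring
  have := (((hγ.sub (hγ₁.const_mul 5)).add (hγ₂.const_mul 4)).add
    tendsto_log_sub_five_mul_log_add_four_mul_log).sub_const (7 / 3)
  convert this using 2 with N
  · rw [sum_range_correctionCoeff]; ring
  · ring

lemma hasSum_pow_add_two_div_add_two {t : ℝ} (ht : |t| < 1) :
    HasSum (fun n : ℕ => t ^ (n + 2) / (n + 2)) (-log (1 - t) - t) := by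
  simpa [add_assoc, one_add_one_eq_two] using
    (hasSum_nat_add_iff' 1).mpr (hasSum_pow_div_log_of_abs_lt_one ht)

lemma hasSum_pow_add_two_div_add_one {t : ℝ} (ht : |t| < 1) :
    HasSum (fun n : ℕ => t ^ (n + 2) / (n + 1)) (-t * log (1 - t)) := by
  convert! (hasSum_pow_div_log_of_abs_lt_one ht).mul_left t using 1
  · ext n
    ring
  · ring

lemma hasSum_sq_pow_add_two_div {x : ℝ} (hx : |x| < 1) (hx₀ : x ≠ 0) :
    HasSum (fun n : ℕ => 4 * (x ^ 2) ^ (n + 2) / (2 * n + 5))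
      (2 / x * (log (1 + x) - log (1 - x)) - 4 - 4 * x ^ 2 / 3) := by
  have := (hasSum_nat_add_iff' 2).mpr ((hasSum_log_sub_log_of_abs_lt_one hx).mul_left (2 / x))
  convert! this using 1
  · ext n
    push_cast
    field_simp
    ring
  · norm_num [sum_range_succ]
    field_simp
    ring

lemma hasSum_correctionCoeff_mul_pow {x : ℝ} (hx : |x| < 1) (hx₀ : x ≠ 0) :
    HasSum (fun n : ℕ => correctionCoeff n * (x ^ 2) ^ (n + 2))
      (firstOrderCorrection x - (7 / 3 - 4 * log 2) * x ^ 2) := by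
  have hx2 : |x ^ 2| < 1 := by rw [abs_pow]; exact pow_lt_one₀ (abs_nonneg x) hx two_ne_zero
  have h_log : log (1 - x ^ 2) = log (1 - x) + log (1 + x) := by
    rw [← log_mul (by linarith [abs_lt.mp hx]) (by linarith [abs_lt.mp hx])]; ring_nf
  have := ((hasSum_pow_add_two_div_add_one hx2).sub
    ((hasSum_pow_add_two_div_add_two hx2).mul_left 3)).add (hasSum_sq_pow_add_two_div hx hx₀)
  convert! this using 1
  · ext n
    rw [correctionCoeff_eq]
    ring
  · rw [h_log]
    unfold firstOrderCorrection
    ring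

lemma hasSum_mul_pow_add_two_le {a : ℕ → ℝ} {s S t : ℝ} (ha : ∀ n, 0 ≤ a n) (hs : HasSum a s)
    (hS : HasSum (fun n => a n * t ^ (n + 2)) S) (ht₀ : 0 ≤ t) (ht₁ : t ≤ 1) : S ≤ t ^ 2 * s := by
  refine hasSum_le (fun n => ?_) hS (hs.mul_left (t ^ 2))
  rw [pow_add, mul_comm (t ^ 2), ← mul_assoc]
  exact mul_le_mul_of_nonneg_right (mul_le_of_le_one_right (ha n) (pow_le_one₀ ht₀ ht₁))
    (sq_nonneg t)

lemma firstOrderCorrection_nonpos {x : ℝ} (hx : |x| < 1) (hx₀ : x ≠ 0) :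
    firstOrderCorrection x ≤ 0 := by
  have h_sq : x ^ 2 ≤ 1 := by rw [← sq_abs]; nlinarith [abs_nonneg x]
  have h_le := hasSum_mul_pow_add_two_le correctionCoeff_nonneg hasSum_correctionCoeff
    (hasSum_correctionCoeff_mul_pow hx hx₀) (sq_nonneg x) h_sq
  have h_log2 : 7 / 3 < 4 * log 2 := by linarith [log_two_gt_d9]
  nlinarith [mul_nonneg (mul_nonneg (sub_pos.mpr h_log2).le (sq_nonneg x)) (sub_nonneg.mpr h_sq)]

/-- Sign of the first-order correction about `n = 0`: the function `Θ₀⁽¹⁾` is nonpositive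
on `(0, π)`. -/
theorem first_order_correction_n0_nonpos :
    ∀ z ∈ Set.Ioo (0 : ℝ) Real.pi,
      -4 + 4 * z ^ 2 / Real.pi ^ 2 * (1 - Real.log 2)
        + (3 - 2 * Real.pi / z - z ^ 2 / Real.pi ^ 2) * Real.log (1 - z / Real.pi)
        + (3 + 2 * Real.pi / z - z ^ 2 / Real.pi ^ 2) * Real.log (1 + z / Real.pi) ≤ 0 := by
  rintro z ⟨hz₀, hzπ⟩
  have hx : |z / π| < 1 := by rw [abs_of_pos (div_pos hz₀ pi_pos), div_lt_one pi_pos]; exact hzπ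
  have := firstOrderCorrection_nonpos hx (div_pos hz₀ pi_pos).ne'
  rwa [firstOrderCorrection, div_pow, div_div_eq_mul_div, ← mul_div_assoc] at this
end

section
/- Eigenvalue condition determining S₁⁽⁰⁾: the integral identity ∫₀^π sin²(t) · ln(sin(t)/t) dt = (π/2)·(3/2 − Si(2π)/(2π) − ln(2π)) holds, where Si(x) = ∫₀^x (sin t)/t dt. Equivalently, setting S₁⁽⁰⁾ = 2π·exp(Si(2π)/(2π) − 3/2), one has ∫₀^π sin²(t)·[ln S₁⁽⁰⁾ + ln(sin(t)/t)] dt = 0. -/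
/-!
Write `sin² t = (1 - cos 2t) / 2` and split `log (sin t / t) = log (sin t) - log t`. The integrals
of `log ∘ sin` and `log` over `[0, π]` are classical; the two integrals against `cos 2t` are done by
parts with the primitive `sin t cos t`, which vanishes at both ends and so absorbs the logarithmic
singularities. Against `log (sin t)` this leaves `∫ cos² t = π / 2`; against `log t` it leaves
`∫₀^π sin 2t / 2t dt = Si(2π) / 2`.
-/

open Real Set intervalIntegral MeasureTheory

namespace Real

theorem sin_eq_mul_sinc (x : ℝ) : sin x = x * sinc x := by
  rcases eq_or_ne x 0 with rfl | hx
  · simp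
  · rw [sinc_of_ne_zero hx]
    field_simp

theorem intervalIntegrable_sin_div_self (a b : ℝ) :
    IntervalIntegrable (fun x => sin x / x) volume a b :=
  (continuous_sinc.intervalIntegrable a b).congr_ae
    (ae_restrict_of_ae ((Measure.ae_ne volume 0).mono fun _ hx => sinc_of_ne_zero hx))

theorem hasDerivAt_sin_mul_cos (x : ℝ) :
    HasDerivAt (fun t => sin t * cos t) (cos (2 * x)) x := by
  refine ((hasDerivAt_sin x).mul (hasDerivAt_cos x)).congr_deriv ?_
  rw [cos_two_mul, ← sin_sq_add_cos_sq x]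
  ring

end Real

/-- Integration by parts allowing `v` to blow up at an endpoint where `u` vanishes. -/
theorem integral_deriv_mul_eq_sub_of_continuousOn_mul {a b : ℝ} {u u' v v' : ℝ → ℝ}
    (hab : a ≤ b) (huv : ContinuousOn (fun t => u t * v t) (Icc a b))
    (hu : ∀ x ∈ Ioo a b, HasDerivAt u (u' x) x) (hv : ∀ x ∈ Ioo a b, HasDerivAt v (v' x) x)
    (hu'v : IntervalIntegrable (fun t => u' t * v t) volume a b)
    (huv' : IntervalIntegrable (fun t => u t * v' t) volume a b) :
    ∫ t in a..b, u' t * v t = u b * v b - u a * v a - ∫ t in a..b, u t * v' t := by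
  rw [eq_sub_iff_add_eq, ← integral_add hu'v huv']
  exact integral_eq_sub_of_hasDerivAt_of_le hab huv (fun x hx => (hu x hx).mul (hv x hx))
    (hu'v.add huv')

theorem integral_sin_sq_mul {a b : ℝ} {f : ℝ → ℝ} (hf : IntervalIntegrable f volume a b) :
    ∫ x in a..b, sin x ^ 2 * f x = ((∫ x in a..b, f x) - ∫ x in a..b, cos (2 * x) * f x) / 2 := by
  have hcos : IntervalIntegrable (fun x => cos (2 * x) * f x) volume a b :=
    hf.continuousOn_mul (by fun_prop)
  rw [← integral_sub hf hcos, ← intervalIntegral.integral_div]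
  congr 1 with x
  rw [sin_sq_eq_half_sub]
  ring

theorem integral_cos_two_mul_mul_log_sin : ∫ x in 0..π, cos (2 * x) * log (sin x) = -(π / 2) := by
  have hsin : EqOn (fun t => sin t * cos t * (cos t / sin t)) (fun t => cos t ^ 2) (Ioo 0 π) :=
    fun t ht => by
      have := (sin_pos_of_mem_Ioo ht).ne'
      field_simp
  rw [integral_deriv_mul_eq_sub_of_continuousOn_mul pi_pos.le (v := fun t => log (sin t))
    (v' := fun t => cos t / sin t) ?cont (fun x _ => hasDerivAt_sin_mul_cos x)
    (fun x hx => (hasDerivAt_sin x).log (sin_pos_of_mem_Ioo hx).ne') ?int ?int',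
    integral_congr_Ioo_of_le pi_pos.le hsin, integral_cos_sq]
  · simp
  case cont =>
    have : (fun t => sin t * cos t * log (sin t)) = fun t => cos t * (sin t * log (sin t)) := by
      ext; ring
    rw [this]
    exact (continuous_cos.mul (continuous_mul_log.comp continuous_sin)).continuousOn
  case int => exact intervalIntegrable_log_sin.continuousOn_mul (by fun_prop)
  case int' =>
    rw [← uIoo_of_le pi_pos.le] at hsin
    exact (continuous_cos.pow 2).intervalIntegrable 0 π |>.congr_uIoo hsin.symm

theorem integral_cos_two_mul_mul_log :
    ∫ x in 0..π, cos (2 * x) * log x = -(∫ x in 0..2 * π, sin x / x) / 2 := by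
  have hsinc : (fun t => sin t * cos t * t⁻¹) = fun t => sin (2 * t) / (2 * t) := by
    ext t
    rw [sin_two_mul]
    ring
  have hcos : (fun t => sin t * cos t * t⁻¹) = fun t => cos t * (sin t / t) := by
    ext t
    ring
  rw [integral_deriv_mul_eq_sub_of_continuousOn_mul pi_pos.le (v := log) (v' := fun t => t⁻¹)
    ?cont (fun x _ => hasDerivAt_sin_mul_cos x) (fun x hx => hasDerivAt_log hx.1.ne')
    (intervalIntegrable_log'.continuousOn_mul (by fun_prop)) ?int', hsinc,
    integral_comp_mul_left (fun x => sin x / x) two_ne_zero]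
  · simp only [sin_pi, sin_zero, zero_mul, mul_zero, smul_eq_mul]
    ring
  case cont =>
    have : (fun t => sin t * cos t * log t) = fun t => cos t * sinc t * (t * log t) := by
      ext t
      rw [sin_eq_mul_sinc]
      ring
    rw [this]
    exact ((continuous_cos.mul continuous_sinc).mul continuous_mul_log).continuousOn
  case int' =>
    rw [hcos]
    exact (intervalIntegrable_sin_div_self 0 π).continuousOn_mul continuous_cos.continuousOn

theorem integral_sin_sq_mul_log_sin :
    ∫ x in 0..π, sin x ^ 2 * log (sin x) = π / 4 - π * log 2 / 2 := by
  have hint : IntervalIntegrable (fun x => log (sin x)) volume 0 π := intervalIntegrable_log_sin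
  rw [integral_sin_sq_mul hint, integral_cos_two_mul_mul_log_sin, integral_log_sin_zero_pi]
  ring

theorem integral_sin_sq_mul_log :
    ∫ x in 0..π, sin x ^ 2 * log x = (π * log π - π) / 2 + (∫ x in 0..2 * π, sin x / x) / 4 := by
  rw [integral_sin_sq_mul intervalIntegrable_log', integral_cos_two_mul_mul_log, integral_log]
  ring

theorem sin_sq_mul_log_sin_div_self_eqOn :
    EqOn (fun t => sin t ^ 2 * log (sin t / t))
      (fun t => sin t ^ 2 * log (sin t) - sin t ^ 2 * log t) (Ioo 0 π) := fun t ht => by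
  simp only
  rw [log_div (sin_pos_of_mem_Ioo ht).ne' ht.1.ne', mul_sub]

theorem intervalIntegrable_sin_sq_mul_log_sin (a b : ℝ) :
    IntervalIntegrable (fun t => sin t ^ 2 * log (sin t)) volume a b :=
  (intervalIntegrable_log_sin (a := a) (b := b)).continuousOn_mul (g := fun t => sin t ^ 2)
    (by fun_prop)

theorem intervalIntegrable_sin_sq_mul_log (a b : ℝ) :
    IntervalIntegrable (fun t => sin t ^ 2 * log t) volume a b :=
  (intervalIntegrable_log' (a := a) (b := b)).continuousOn_mul (g := fun t => sin t ^ 2)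
    (by fun_prop)

theorem intervalIntegrable_sin_sq_mul_log_sin_div_self :
    IntervalIntegrable (fun t => sin t ^ 2 * log (sin t / t)) volume 0 π := by
  refine ((intervalIntegrable_sin_sq_mul_log_sin 0 π).sub
    (intervalIntegrable_sin_sq_mul_log 0 π)).congr_uIoo ?_
  rw [uIoo_of_le pi_pos.le]
  exact sin_sq_mul_log_sin_div_self_eqOn.symm

theorem integral_sin_sq_mul_log_sin_div_self :
    ∫ t in 0..π, sin t ^ 2 * log (sin t / t) =
      π / 2 * (3 / 2 - (∫ t in 0..2 * π, sin t / t) / (2 * π) - log (2 * π)) := by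
  rw [integral_congr_Ioo_of_le pi_pos.le sin_sq_mul_log_sin_div_self_eqOn,
    integral_sub (intervalIntegrable_sin_sq_mul_log_sin 0 π) (intervalIntegrable_sin_sq_mul_log 0 π),
    integral_sin_sq_mul_log_sin, integral_sin_sq_mul_log, log_mul two_ne_zero pi_ne_zero]
  field_simp
  ring

/-- Eigenvalue condition determining `S₁⁽⁰⁾`:
`∫₀^π sin²t · ln(sin t / t) dt = (π/2)·(3/2 − Si(2π)/(2π) − ln(2π))`, where
`Si(x) = ∫₀^x (sin t)/t dt`; equivalently, with `S₁⁽⁰⁾ = 2π·exp(Si(2π)/(2π) − 3/2)`,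
`∫₀^π sin²t·[ln S₁⁽⁰⁾ + ln(sin t / t)] dt = 0`. -/
theorem eigenvalue_condition_S10 :
    let Si : ℝ → ℝ := fun x => ∫ t in (0 : ℝ)..x, Real.sin t / t
    ((∫ t in (0 : ℝ)..Real.pi, Real.sin t ^ 2 * Real.log (Real.sin t / t)) =
      Real.pi / 2 *
        (3 / 2 - Si (2 * Real.pi) / (2 * Real.pi) - Real.log (2 * Real.pi))) ∧
    (∫ t in (0 : ℝ)..Real.pi, Real.sin t ^ 2 *
        (Real.log (2 * Real.pi * Real.exp (Si (2 * Real.pi) / (2 * Real.pi) - 3 / 2))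
          + Real.log (Real.sin t / t))) = 0 := by
  intro Si
  refine ⟨integral_sin_sq_mul_log_sin_div_self, ?_⟩
  set c := log (2 * π * rexp (Si (2 * π) / (2 * π) - 3 / 2)) with hc
  simp only [mul_add]
  rw [integral_add ((by fun_prop : Continuous fun t => sin t ^ 2 * c).intervalIntegrable 0 π)
      intervalIntegrable_sin_sq_mul_log_sin_div_self,
    intervalIntegral.integral_mul_const, integral_sin_sq, integral_sin_sq_mul_log_sin_div_self,
    hc, log_mul (by positivity) (exp_ne_zero _), log_exp]
  simp only [sin_pi, sin_zero, Si]
  ring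
end

section
/- First-order scaled delta expansion solution at n = 1: define for 0 < z < π the function Θ₁⁽¹⁾(z) = (sin z / z)·[1 − ln(2π)/2 − Si(2π)/(4π) − Cin(2z)/4 + (ln z)/2 − (1/2)·ln(sin z)] + (cos z / z)·[(z/2)·ln(2π) − (z/2)·ln z + z·Si(2π)/(4π) − Si(2z)/4 + (1/2)·∫₀^z ln(sin t) dt], where Si(x) = ∫₀^x (sin t)/t dt and Cin(x) = ∫₀^x (1 − cos t)/t dt. Then Θ₁⁽¹⁾ satisfies Θ₁⁽¹⁾''(z) + (2/z)·Θ₁⁽¹⁾'(z) + Θ₁⁽¹⁾(z) = −(sin z / z)·[ln S₁⁽⁰⁾ + ln(sin z / z)] for all 0 < z < π, where S₁⁽⁰⁾ = 2π·exp(Si(2π)/(2π) − 3/2); moreover Θ₁⁽¹⁾(z) → 0 and Θ₁⁽¹⁾'(z) → 0 as z → 0⁺, and Θ₁⁽¹⁾(z) → 0 as z → π⁻. -/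
/-!
Write `L` for `ln S₁⁽⁰⁾` and `Θ = u / z` with `u = sin z · A(z) + cos z · B(z)`. Then
`Θ'' + (2/z) Θ' + Θ = (u'' + u) / z`, and `u` is a variation-of-parameters solution of
`u'' + u = -sin z · (L + ln (sin z / z))`, with `u' = -cos z · Cin(2z)/4 - sin z · B(z)`.
This holds for every value of `L`.

Near `0`, `∫₀^z ln sin = z ln z - z + o(z)` cancels the `z ln z` in `B`, so `A → 1/4 - L/2` and
`B/z → L/2 - 1/4`; hence `Θ → 0`, and `Θ' = u'/z - u/z² → 0` by l'Hôpital. Near `π`,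
`sin z · ln (sin z) → 0` gives `Θ → -B(π)/π`, and `∫₀^π ln sin = -π ln 2` turns `B(π)` into
`(π/2) (L - ln (2π) - Si(2π)/(2π) + 3/2)`. This vanishes exactly for `L = ln S₁⁽⁰⁾`.
-/

open Real Filter Set Topology intervalIntegral MeasureTheory

noncomputable def Si (x : ℝ) : ℝ := ∫ t in (0 : ℝ)..x, sin t / t

noncomputable def Cin (x : ℝ) : ℝ := ∫ t in (0 : ℝ)..x, (1 - cos t) / t

lemma Si_eq_integral_sinc (x : ℝ) : Si x = ∫ t in (0 : ℝ)..x, sinc t :=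
  integral_congr_ae <| by
    filter_upwards [Measure.ae_ne volume (0 : ℝ)] with t ht _
    rw [sinc_of_ne_zero ht]

lemma hasDerivAt_Si (x : ℝ) : HasDerivAt Si (sinc x) x := by
  rw [show Si = fun x => ∫ t in (0 : ℝ)..x, sinc t from funext Si_eq_integral_sinc]
  exact (continuous_sinc.integral_hasStrictDerivAt 0 x).hasDerivAt

lemma one_sub_cos_div_eq_dslope :
    (fun t : ℝ => (1 - cos t) / t) = dslope (fun t => 1 - cos t) 0 := by
  ext t
  rcases eq_or_ne t 0 with rfl | ht
  · simp [dslope_same]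
  · simp [dslope_of_ne _ ht, slope_def_field]

lemma continuous_one_sub_cos_div : Continuous fun t : ℝ => (1 - cos t) / t := by
  rw [one_sub_cos_div_eq_dslope, ← continuousOn_univ, continuousOn_dslope univ_mem]
  exact ⟨by fun_prop, by fun_prop⟩

lemma hasDerivAt_Cin (x : ℝ) : HasDerivAt Cin ((1 - cos x) / x) x :=
  (continuous_one_sub_cos_div.integral_hasStrictDerivAt 0 x).hasDerivAt

lemma hasDerivAt_Si_two_mul (z : ℝ) :
    HasDerivAt (fun z => Si (2 * z)) (2 * sinc (2 * z)) z :=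
  ((hasDerivAt_Si (2 * z)).comp z ((hasDerivAt_id' z).const_mul 2)).congr_deriv (by ring)

lemma hasDerivAt_Cin_two_mul (z : ℝ) :
    HasDerivAt (fun z => Cin (2 * z)) ((1 - cos (2 * z)) / z) z :=
  ((hasDerivAt_Cin (2 * z)).comp z ((hasDerivAt_id' z).const_mul 2)).congr_deriv (by ring)

lemma continuous_Si : Continuous Si :=
  continuous_iff_continuousAt.2 fun x => (hasDerivAt_Si x).continuousAt

lemma continuous_Cin : Continuous Cin :=
  continuous_iff_continuousAt.2 fun x => (hasDerivAt_Cin x).continuousAt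

lemma tendsto_div_nhdsGT_zero_of_hasDerivAt {F : ℝ → ℝ} {d : ℝ} (hF : HasDerivAt F d 0)
    (h0 : F 0 = 0) : Tendsto (fun x => F x / x) (𝓝[>] 0) (𝓝 d) := by
  simpa [h0, div_eq_inv_mul] using hF.tendsto_slope_zero_right

lemma hasDerivAt_integral_log_sin {z : ℝ} (hz : sin z ≠ 0) :
    HasDerivAt (fun z => ∫ t in (0 : ℝ)..z, log (sin t)) (log (sin z)) z :=
  integral_hasDerivAt_right intervalIntegrable_log_sin
    (measurable_log.comp measurable_sin).stronglyMeasurable.stronglyMeasurableAtFilter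
    ((continuousAt_log hz).comp continuous_sin.continuousAt)

lemma continuous_integral_log_sin : Continuous fun z => ∫ t in (0 : ℝ)..z, log (sin t) :=
  continuous_primitive (fun _ _ => intervalIntegrable_log_sin) 0

lemma sinc_pos {t : ℝ} (ht : |t| < π) : 0 < sinc t := by
  wlog h0 : 0 ≤ t generalizing t
  · simpa using this (by rwa [abs_neg]) (neg_nonneg.2 (not_le.1 h0).le)
  rcases h0.eq_or_lt with rfl | h0
  · simp
  · rw [sinc_of_ne_zero h0.ne']
    exact div_pos (sin_pos_of_pos_of_lt_pi h0 ((le_abs_self t).trans_lt ht)) h0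

lemma log_sin_eq_log_add_log_sinc {t : ℝ} (h0 : 0 ≤ t) (hπ : t < π) :
    log (sin t) = log t + log (sinc t) := by
  rcases h0.eq_or_lt with rfl | h0
  · simp
  · rw [sinc_of_ne_zero h0.ne', log_div (sin_pos_of_pos_of_lt_pi h0 hπ).ne' h0.ne']
    ring

lemma continuousAt_log_sinc {t : ℝ} (ht : |t| < π) :
    ContinuousAt (fun t => log (sinc t)) t :=
  (continuousAt_log (sinc_pos ht).ne').comp continuous_sinc.continuousAt

lemma integral_log_sin_eq {z : ℝ} (h0 : 0 ≤ z) (hπ : z < π) :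
    ∫ t in (0 : ℝ)..z, log (sin t) = z * log z - z + ∫ t in (0 : ℝ)..z, log (sinc t) := by
  have hsinc : IntervalIntegrable (fun t => log (sinc t)) volume 0 z :=
    ContinuousOn.intervalIntegrable fun t ht => by
      rw [uIcc_of_le h0] at ht
      exact (continuousAt_log_sinc (by rw [abs_of_nonneg ht.1]; exact ht.2.trans_lt hπ)
        ).continuousWithinAt
  calc ∫ t in (0 : ℝ)..z, log (sin t)
      = ∫ t in (0 : ℝ)..z, (log t + log (sinc t)) := integral_congr fun t ht => by
        rw [uIcc_of_le h0] at ht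
        exact log_sin_eq_log_add_log_sinc ht.1 (ht.2.trans_lt hπ)
    _ = z * log z - z + ∫ t in (0 : ℝ)..z, log (sinc t) := by
        rw [integral_add intervalIntegrable_log' hsinc, integral_log]
        simp

lemma hasDerivAt_integral_log_sinc_zero :
    HasDerivAt (fun z => ∫ t in (0 : ℝ)..z, log (sinc t)) 0 0 := by
  simpa using integral_hasDerivAt_right IntervalIntegrable.refl
    (measurable_log.comp continuous_sinc.measurable).stronglyMeasurable.stronglyMeasurableAtFilter
    (continuousAt_log_sinc (t := 0) (by simpa using pi_pos))

/-- The two brackets of the formula for `Θ₁⁽¹⁾`, with `ln S₁⁽⁰⁾` abstracted to `L`, so that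
`Θ₁⁽¹⁾(z) = zTheta (ln S₁⁽⁰⁾) z / z`. -/
noncomputable def sinCoeff (L z : ℝ) : ℝ :=
  1 / 4 - L / 2 - Cin (2 * z) / 4 + log z / 2 - log (sin z) / 2

noncomputable def cosCoeff (L z : ℝ) : ℝ :=
  z * (L / 2 + 3 / 4) - z / 2 * log z - Si (2 * z) / 4 + (∫ t in (0 : ℝ)..z, log (sin t)) / 2

noncomputable def zTheta (L z : ℝ) : ℝ := sin z * sinCoeff L z + cos z * cosCoeff L z

noncomputable def zThetaDeriv (L z : ℝ) : ℝ := -(cos z * Cin (2 * z)) / 4 - sin z * cosCoeff L z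

section Derivatives

variable (L : ℝ) {z : ℝ}

lemma hasDerivAt_sinCoeff (hz : z ≠ 0) (hs : sin z ≠ 0) :
    HasDerivAt (sinCoeff L) ((cos z ^ 2 / z - cos z / sin z) / 2) z := by
  have h : HasDerivAt (sinCoeff L) (-((1 - cos (2 * z)) / z) / 4 + z⁻¹ / 2
      - (sin z)⁻¹ * cos z / 2) z :=
    ((((hasDerivAt_const z (1 / 4 - L / 2)).sub ((hasDerivAt_Cin_two_mul z).div_const 4)).add
      ((hasDerivAt_log hz).div_const 2)).sub
      (((hasDerivAt_log hs).comp z (hasDerivAt_sin z)).div_const 2)).congr_deriv (by ring)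
  refine h.congr_deriv ?_
  rw [cos_two_mul]
  field_simp
  ring

lemma hasDerivAt_cosCoeff (hz : z ≠ 0) (hs : sin z ≠ 0) :
    HasDerivAt (cosCoeff L) ((L + log (sin z) - log z + 1 / 2 - sin z * cos z / z) / 2) z := by
  have h : HasDerivAt (cosCoeff L) (1 * (L / 2 + 3 / 4) - (1 / 2 * log z + z / 2 * z⁻¹)
      - 2 * sinc (2 * z) / 4 + log (sin z) / 2) z :=
    (((((hasDerivAt_id' z).mul_const _).sub (((hasDerivAt_id' z).div_const 2).mul
      (hasDerivAt_log hz))).sub ((hasDerivAt_Si_two_mul z).div_const 4)).add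
      ((hasDerivAt_integral_log_sin hs).div_const 2))
  refine h.congr_deriv ?_
  rw [sinc_of_ne_zero (mul_ne_zero two_ne_zero hz), sin_two_mul]
  field_simp
  ring

lemma hasDerivAt_zTheta (hz : z ≠ 0) (hs : sin z ≠ 0) :
    HasDerivAt (zTheta L) (zThetaDeriv L z) z := by
  refine (((hasDerivAt_sin z).mul (hasDerivAt_sinCoeff L hz hs)).add
    ((hasDerivAt_cos z).mul (hasDerivAt_cosCoeff L hz hs))).congr_deriv ?_
  simp only [zThetaDeriv, sinCoeff]
  field_simp
  ring

lemma hasDerivAt_zThetaDeriv (hz : z ≠ 0) (hs : sin z ≠ 0) :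
    HasDerivAt (zThetaDeriv L) (-sin z * (L + log (sin z / z)) - zTheta L z) z := by
  refine ((((hasDerivAt_cos z).mul (hasDerivAt_Cin_two_mul z)).neg.div_const 4).sub
    ((hasDerivAt_sin z).mul (hasDerivAt_cosCoeff L hz hs))).congr_deriv ?_
  rw [log_div hs hz, cos_two_mul]
  simp only [zTheta, sinCoeff]
  field_simp
  linear_combination 8 * cos z * sin_sq_add_cos_sq z

end Derivatives

lemma deriv_deriv_div_self_add_two_div_mul_deriv {u u' : ℝ → ℝ} {u'' z : ℝ} (hz : z ≠ 0)
    (hu : ∀ᶠ w in 𝓝 z, HasDerivAt u (u' w) w) (hu' : HasDerivAt u' u'' z) :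
    deriv (deriv fun w => u w / w) z + 2 / z * deriv (fun w => u w / w) z + u z / z =
      (u'' + u z) / z := by
  have hderiv : deriv (fun w => u w / w) =ᶠ[𝓝 z] fun w => (u' w * w - u w) / w ^ 2 := by
    filter_upwards [hu, eventually_ne_nhds hz] with w hw hw0
    simpa using (hw.fun_div (hasDerivAt_id' w) hw0).deriv
  rw [hderiv.deriv_eq, hderiv.self_of_nhds, (((hu'.fun_mul (hasDerivAt_id' z)).fun_sub
    hu.self_of_nhds).fun_div (hasDerivAt_pow 2 z) (pow_ne_zero 2 hz)).deriv]
  field_simp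
  ring

lemma deriv_deriv_zTheta_div_self_add_two_div_mul_deriv (L : ℝ) {z : ℝ} (hz : z ≠ 0)
    (hs : sin z ≠ 0) :
    deriv (deriv fun w => zTheta L w / w) z + 2 / z * deriv (fun w => zTheta L w / w) z
      + zTheta L z / z = -(sin z / z) * (L + log (sin z / z)) := by
  have hnear : ∀ᶠ w in 𝓝 z, w ≠ 0 ∧ sin w ≠ 0 :=
    (eventually_ne_nhds hz).and (continuous_sin.continuousAt.eventually_ne hs)
  rw [deriv_deriv_div_self_add_two_div_mul_deriv hz
    (hnear.mono fun w hw => hasDerivAt_zTheta L hw.1 hw.2) (hasDerivAt_zThetaDeriv L hz hs)]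
  ring

lemma tendsto_cos_nhdsGT_zero : Tendsto cos (𝓝[>] 0) (𝓝 1) := by
  simpa using (continuous_cos.tendsto 0).mono_left nhdsWithin_le_nhds

section LimitsAtZero

variable (L : ℝ)

lemma tendsto_sinCoeff_nhdsGT_zero : Tendsto (sinCoeff L) (𝓝[>] 0) (𝓝 (1 / 4 - L / 2)) := by
  have hCin : Tendsto (fun z => Cin (2 * z)) (𝓝[>] 0) (𝓝 0) := by
    have h := (hasDerivAt_Cin_two_mul 0).continuousAt.tendsto.mono_left
      (nhdsWithin_le_nhds (s := Ioi 0))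
    rwa [mul_zero, show Cin 0 = 0 by simp [Cin]] at h
  have hsinc : Tendsto (fun z => log (sinc z)) (𝓝[>] 0) (𝓝 0) := by
    simpa using (continuousAt_log_sinc (t := 0) (by simpa using pi_pos)).tendsto.mono_left
      nhdsWithin_le_nhds
  have h := ((tendsto_const_nhds (x := 1 / 4 - L / 2)).sub (hCin.div_const 4)).sub
    (hsinc.div_const 2)
  rw [zero_div, zero_div, sub_zero, sub_zero] at h
  refine h.congr' ?_
  filter_upwards [Ioo_mem_nhdsGT pi_pos] with z hz
  rw [sinCoeff, log_sin_eq_log_add_log_sinc hz.1.le hz.2]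
  ring

lemma tendsto_cosCoeff_div_nhdsGT_zero :
    Tendsto (fun z => cosCoeff L z / z) (𝓝[>] 0) (𝓝 (L / 2 - 1 / 4)) := by
  have hH : HasDerivAt (fun z => z * (L / 2 + 1 / 4) - Si (2 * z) / 4
      + (∫ t in (0 : ℝ)..z, log (sinc t)) / 2) (L / 2 - 1 / 4) 0 :=
    ((((hasDerivAt_id' 0).mul_const _).sub ((hasDerivAt_Si_two_mul 0).div_const 4)).add
      (hasDerivAt_integral_log_sinc_zero.div_const 2)).congr_deriv (by simp; ring)
  refine (tendsto_div_nhdsGT_zero_of_hasDerivAt hH (by simp [Si])).congr' ?_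
  filter_upwards [Ioo_mem_nhdsGT pi_pos] with z hz
  rw [cosCoeff, integral_log_sin_eq hz.1.le hz.2]
  ring

lemma tendsto_zTheta_div_nhdsGT_zero :
    Tendsto (fun z => zTheta L z / z) (𝓝[>] 0) (𝓝 0) := by
  have hsin : Tendsto (fun z => sin z / z) (𝓝[>] 0) (𝓝 1) := by
    simpa using tendsto_div_nhdsGT_zero_of_hasDerivAt (hasDerivAt_sin 0) sin_zero
  have h := (hsin.mul (tendsto_sinCoeff_nhdsGT_zero L)).add
    (tendsto_cos_nhdsGT_zero.mul (tendsto_cosCoeff_div_nhdsGT_zero L))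
  rw [one_mul, one_mul, sub_add_sub_cancel', sub_self] at h
  exact h.congr fun z => by rw [zTheta]; ring

lemma tendsto_zThetaDeriv_div_nhdsGT_zero :
    Tendsto (fun z => zThetaDeriv L z / z) (𝓝[>] 0) (𝓝 0) := by
  have hCin : Tendsto (fun z => Cin (2 * z) / z) (𝓝[>] 0) (𝓝 0) := by
    simpa using tendsto_div_nhdsGT_zero_of_hasDerivAt (hasDerivAt_Cin_two_mul 0)
      (by simp [Cin])
  have hsin : Tendsto sin (𝓝[>] 0) (𝓝 0) := by
    simpa using (continuous_sin.tendsto 0).mono_left nhdsWithin_le_nhds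
  have h := ((tendsto_cos_nhdsGT_zero.mul hCin).neg.div_const 4).sub
    (hsin.mul (tendsto_cosCoeff_div_nhdsGT_zero L))
  rw [mul_zero, neg_zero, zero_div, zero_mul, sub_zero] at h
  exact h.congr fun z => by rw [zThetaDeriv]; ring

lemma tendsto_zTheta_div_sq_nhdsGT_zero :
    Tendsto (fun z => zTheta L z / z ^ 2) (𝓝[>] 0) (𝓝 0) := by
  have hid : Tendsto (fun z : ℝ => z) (𝓝[>] 0) (𝓝 0) := nhdsWithin_le_nhds
  refine HasDerivAt.lhopital_zero_right_on_Ioo pi_pos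
    (fun z hz => hasDerivAt_zTheta L hz.1.ne' (sin_pos_of_pos_of_lt_pi hz.1 hz.2).ne')
    (fun z _ => hasDerivAt_pow 2 z) (fun z hz => by simp [hz.1.ne']) ?_ ?_ ?_
  · have h := hid.mul (tendsto_zTheta_div_nhdsGT_zero L)
    rw [zero_mul] at h
    refine h.congr' ?_
    filter_upwards [self_mem_nhdsWithin] with z (hz : 0 < z)
    field_simp
  · simpa using hid.pow 2
  · have h := (tendsto_zThetaDeriv_div_nhdsGT_zero L).div_const 2
    rw [zero_div] at h
    exact h.congr fun z => by push_cast; ring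

lemma tendsto_deriv_zTheta_div_nhdsGT_zero :
    Tendsto (deriv fun z => zTheta L z / z) (𝓝[>] 0) (𝓝 0) := by
  have h := (tendsto_zThetaDeriv_div_nhdsGT_zero L).sub (tendsto_zTheta_div_sq_nhdsGT_zero L)
  rw [sub_zero] at h
  refine h.congr' ?_
  filter_upwards [Ioo_mem_nhdsGT pi_pos] with z hz
  rw [((hasDerivAt_zTheta L hz.1.ne' (sin_pos_of_pos_of_lt_pi hz.1 hz.2).ne').fun_div
    (hasDerivAt_id' z) hz.1.ne').deriv]
  field_simp

end LimitsAtZero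

lemma continuous_cosCoeff (L : ℝ) : Continuous (cosCoeff L) := by
  have h : cosCoeff L = fun z => z * (L / 2 + 3 / 4) - z * log z / 2 - Si (2 * z) / 4
      + (∫ t in (0 : ℝ)..z, log (sin t)) / 2 := by
    ext z
    rw [cosCoeff]
    ring
  rw [h]
  have := continuous_Si
  have := continuous_integral_log_sin
  have := continuous_mul_log
  fun_prop

lemma cosCoeff_pi (L : ℝ) :
    cosCoeff L π = π / 2 * (L - (log (2 * π) + Si (2 * π) / (2 * π) - 3 / 2)) := by
  rw [cosCoeff, integral_log_sin_zero_pi, log_mul two_ne_zero pi_ne_zero]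
  field_simp
  ring

lemma tendsto_zTheta_div_nhdsLT_pi (L : ℝ) :
    Tendsto (fun z => zTheta L z / z) (𝓝[<] π) (𝓝 (-cosCoeff L π / π)) := by
  -- `sinCoeff` has a logarithmic singularity at `π`, but `sin z * log (sin z)` is continuous.
  have hsin : (fun z => sin z * sinCoeff L z) = fun z =>
      sin z * (1 / 4 - L / 2 - Cin (2 * z) / 4 + log z / 2) - sin z * log (sin z) / 2 := by
    ext z
    rw [sinCoeff]
    ring
  have hcont : ContinuousAt (fun z => sin z * sinCoeff L z) π := by
    have hA : ContinuousAt (fun z => 1 / 4 - L / 2 - Cin (2 * z) / 4 + log z / 2) π :=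
      (continuous_const.sub ((continuous_Cin.comp (continuous_const_mul 2)).div_const 4)
        ).continuousAt.add ((continuousAt_log pi_ne_zero).div_const 2)
    rw [hsin]
    exact (continuous_sin.continuousAt.mul hA).sub
      ((continuous_mul_log.comp continuous_sin).continuousAt.div_const 2)
  have h := ((hcont.tendsto.add ((continuous_cos.mul (continuous_cosCoeff L)).tendsto π)).div
    (continuous_id.tendsto π) pi_ne_zero).mono_left (nhdsWithin_le_nhds (s := Iio π))
  simpa [zTheta, neg_div, Pi.div_def] using h

/-- First-order scaled delta expansion solution at `n = 1`: the explicit function `Θ₁⁽¹⁾`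
satisfies `Θ₁⁽¹⁾'' + (2/z)·Θ₁⁽¹⁾' + Θ₁⁽¹⁾ = −(sin z / z)·[ln S₁⁽⁰⁾ + ln(sin z / z)]`
on `(0, π)`, where `S₁⁽⁰⁾ = 2π·exp(Si(2π)/(2π) − 3/2)`; moreover `Θ₁⁽¹⁾(z) → 0` and
`Θ₁⁽¹⁾'(z) → 0` as `z → 0⁺`, and `Θ₁⁽¹⁾(z) → 0` as `z → π⁻`. -/
theorem scaled_delta_expansion_first_order_n1 :
    let Si : ℝ → ℝ := fun x => ∫ t in (0 : ℝ)..x, Real.sin t / t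
    let Cin : ℝ → ℝ := fun x => ∫ t in (0 : ℝ)..x, (1 - Real.cos t) / t
    let S10 : ℝ := 2 * Real.pi * Real.exp (Si (2 * Real.pi) / (2 * Real.pi) - 3 / 2)
    let Θ : ℝ → ℝ := fun z =>
      Real.sin z / z *
          (1 - Real.log (2 * Real.pi) / 2 - Si (2 * Real.pi) / (4 * Real.pi)
            - Cin (2 * z) / 4 + Real.log z / 2 - 1 / 2 * Real.log (Real.sin z))
        + Real.cos z / z *
          (z / 2 * Real.log (2 * Real.pi) - z / 2 * Real.log z
            + z * Si (2 * Real.pi) / (4 * Real.pi) - Si (2 * z) / 4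
            + 1 / 2 * ∫ t in (0 : ℝ)..z, Real.log (Real.sin t))
    (∀ z ∈ Set.Ioo (0 : ℝ) Real.pi,
      deriv (deriv Θ) z + 2 / z * deriv Θ z + Θ z =
        -(Real.sin z / z) * (Real.log S10 + Real.log (Real.sin z / z))) ∧
    Filter.Tendsto Θ (nhdsWithin 0 (Set.Ioi 0)) (nhds 0) ∧
    Filter.Tendsto (deriv Θ) (nhdsWithin 0 (Set.Ioi 0)) (nhds 0) ∧
    Filter.Tendsto Θ (nhdsWithin Real.pi (Set.Iio Real.pi)) (nhds 0) := by
  intro Si' Cin' S10 Θ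
  have hSi : Si' = Si := rfl
  have hCin : Cin' = Cin := rfl
  have hS10 : log S10 = log (2 * π) + Si (2 * π) / (2 * π) - 3 / 2 := by
    rw [log_mul (by positivity) (exp_ne_zero _), log_exp, hSi]
    ring
  have hΘ : Θ = fun z => zTheta (log S10) z / z := by
    ext z
    simp only [Θ, hSi, hCin, zTheta, sinCoeff, cosCoeff, hS10]
    ring
  rw [hΘ]
  refine ⟨fun z hz => deriv_deriv_zTheta_div_self_add_two_div_mul_deriv _ hz.1.ne'
      (sin_pos_of_pos_of_lt_pi hz.1 hz.2).ne',
    tendsto_zTheta_div_nhdsGT_zero _, tendsto_deriv_zTheta_div_nhdsGT_zero _, ?_⟩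
  simpa [cosCoeff_pi, hS10] using tendsto_zTheta_div_nhdsLT_pi (log S10)
end

section
/- First-order delta expansion correction about n = 0 (Seidov): the function y(x) = 5x²/18 − 4 + (3 − 2√6/x − x²/6)·ln(1 − x/√6) + (3 + 2√6/x − x²/6)·ln(1 + x/√6), defined for 0 < x < √6, satisfies y''(x) + (2/x)·y'(x) = −ln(1 − x²/6) for all 0 < x < √6, together with the initial conditions y(x) → 0 and y'(x) → 0 as x → 0⁺. -/
/-!
Put `w x = x · y x`. Then `y'' + (2/x) y' = w''/x`, and after merging
`log (1 - x/√6) + log (1 + x/√6) = log (1 - x²/6)` the function `w` is smooth on `(-√6, √6)`,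
with `w' x = x²/2 + (3 - x²/2) log (1 - x²/6)` and `w'' x = -x log (1 - x²/6)`.
Since `w 0 = w' 0 = 0`, the limit of `y = w/x` at `0⁺` is `w' 0 = 0`, and by l'Hôpital
that of `y' = (x w' - w)/x²` is `w'' 0 / 2 = 0`.
-/

open Real Set Filter Topology

noncomputable def radialLaplacian (y : ℝ → ℝ) (x : ℝ) : ℝ :=
  deriv (deriv y) x + 2 / x * deriv y x

section

variable {U : Set ℝ} {y w w' w'' : ℝ → ℝ} {x c : ℝ}

theorem hasDerivAt_of_eqOn_div (hU : IsOpen U) (hy : EqOn y (fun z => w z / z) U) (hx : x ∈ U)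
    (hx0 : x ≠ 0) (hw : HasDerivAt w c x) :
    HasDerivAt y ((x * c - w x) / x ^ 2) x := by
  refine ((hw.div (hasDerivAt_id' x) hx0).congr_of_eventuallyEq
    (eventuallyEq_of_mem (hU.mem_nhds hx) hy)).congr_deriv ?_
  ring

theorem radialLaplacian_of_eqOn_div (hU : IsOpen U) (h0 : (0 : ℝ) ∉ U)
    (hy : EqOn y (fun z => w z / z) U) (hw : ∀ z ∈ U, HasDerivAt w (w' z) z)
    (hw' : HasDerivAt w' (w'' x) x) (hx : x ∈ U) :
    radialLaplacian y x = w'' x / x := by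
  have hne : ∀ z ∈ U, z ≠ 0 := fun z hz h => h0 (h ▸ hz)
  have hdy : EqOn (deriv y) (fun z => (z * w' z - w z) / z ^ 2) U := fun z hz =>
    (hasDerivAt_of_eqOn_div hU hy hz (hne z hz) (hw z hz)).deriv
  have hd2 : HasDerivAt (deriv y)
      (((1 * w' x + x * w'' x - w' x) * x ^ 2 - (x * w' x - w x) * (2 * x)) / (x ^ 2) ^ 2) x := by
    have := (((hasDerivAt_id' x).mul hw').sub (hw x hx)).div (hasDerivAt_pow 2 x)
      (pow_ne_zero 2 (hne x hx))
    simp only [Nat.cast_ofNat, Nat.add_one_sub_one, pow_one] at this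
    exact this.congr_of_eventuallyEq (eventuallyEq_of_mem (hU.mem_nhds hx) hdy)
  rw [radialLaplacian, hd2.deriv, hdy hx]
  field_simp [hne x hx]
  ring

theorem HasDerivAt.tendsto_div_nhdsNE_zero (hw : HasDerivAt w c 0) (h0 : w 0 = 0) :
    Tendsto (fun z => w z / z) (𝓝[≠] 0) (𝓝 c) := by
  simpa [h0, div_eq_inv_mul] using hasDerivAt_iff_tendsto_slope_zero.mp hw

theorem tendsto_mul_sub_div_sq_nhdsGT_zero (hw : ∀ᶠ z in 𝓝 0, HasDerivAt w (w' z) z)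
    (hw' : ∀ᶠ z in 𝓝 0, HasDerivAt w' (w'' z) z) (hw'' : Tendsto w'' (𝓝[>] 0) (𝓝 c))
    (h0 : w 0 = 0) :
    Tendsto (fun z => (z * w' z - w z) / z ^ 2) (𝓝[>] 0) (𝓝 (c / 2)) := by
  have hcont : ContinuousAt (fun z => z * w' z - w z) 0 :=
    (continuousAt_id.mul hw'.self_of_nhds.continuousAt).sub hw.self_of_nhds.continuousAt
  refine HasDerivAt.lhopital_zero_nhdsGT (f' := fun z => z * w'' z) (g' := fun z => 2 * z)
    ?_ ?_ ?_ ?_ ?_ ?_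
  · filter_upwards [nhdsWithin_le_nhds (hw.and hw')] with z ⟨hwz, hw'z⟩
    exact (((hasDerivAt_id' z).mul hw'z).sub hwz).congr_deriv (by ring)
  · exact Eventually.of_forall fun z => by simpa using hasDerivAt_pow 2 z
  · filter_upwards [self_mem_nhdsWithin] with z (hz : 0 < z)
    exact mul_ne_zero two_ne_zero hz.ne'
  · simpa [h0] using hcont.tendsto.mono_left nhdsWithin_le_nhds
  · simpa using ((continuous_pow 2).tendsto (0 : ℝ)).mono_left nhdsWithin_le_nhds
  · refine (hw''.div_const 2).congr' ?_
    filter_upwards [self_mem_nhdsWithin] with z (hz : 0 < z)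
    field_simp [hz.ne']

theorem hasDerivAt_log_one_add_div_sub_log_one_sub_div {a : ℝ} (ha : a ≠ 0)
    (hx : x ^ 2 ≠ a ^ 2) :
    HasDerivAt (fun y => log (1 + y / a) - log (1 - y / a)) (2 * a / (a ^ 2 - x ^ 2)) x := by
  have hsub : a - x ≠ 0 := by contrapose! hx; rw [sub_eq_zero.mp hx]
  have hadd : a + x ≠ 0 := by contrapose! hx; rw [eq_neg_of_add_eq_zero_left hx]; ring
  have hM := (((hasDerivAt_id' x).div_const a).const_add 1).log
    (by field_simp; exact div_ne_zero hadd ha)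
  have hL := (((hasDerivAt_id' x).div_const a).const_sub 1).log
    (by field_simp; exact div_ne_zero hsub ha)
  refine (hM.sub hL).congr_deriv ?_
  field_simp
  ring

end

noncomputable def seidovY (x : ℝ) : ℝ :=
  5 * x ^ 2 / 18 - 4
    + (3 - 2 * √6 / x - x ^ 2 / 6) * log (1 - x / √6)
    + (3 + 2 * √6 / x - x ^ 2 / 6) * log (1 + x / √6)

noncomputable def seidovW (x : ℝ) : ℝ :=
  5 * x ^ 3 / 18 - 4 * x + (3 * x - x ^ 3 / 6) * log (1 - x ^ 2 / 6)
    + 2 * √6 * (log (1 + x / √6) - log (1 - x / √6))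

noncomputable def seidovW' (x : ℝ) : ℝ :=
  x ^ 2 / 2 + (3 - x ^ 2 / 2) * log (1 - x ^ 2 / 6)

section

variable {x : ℝ}

theorem sq_ne_six_of_mem_Ioo (hx : x ∈ Ioo 0 √6) : x ^ 2 ≠ 6 :=
  ((lt_sqrt hx.1.le).mp hx.2).ne

theorem one_sub_div_sqrt_six_mul_one_add (x : ℝ) :
    (1 - x / √6) * (1 + x / √6) = 1 - x ^ 2 / 6 := by
  rw [show x ^ 2 / 6 = (x / √6) ^ 2 by rw [div_pow, sq_sqrt (by norm_num)]]
  ring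

theorem log_one_sub_sq_div_six (hx : x ^ 2 ≠ 6) :
    log (1 - x ^ 2 / 6) = log (1 - x / √6) + log (1 + x / √6) := by
  have h : 1 - x ^ 2 / 6 ≠ 0 := by contrapose! hx; linarith
  rw [← one_sub_div_sqrt_six_mul_one_add] at h ⊢
  exact log_mul (left_ne_zero_of_mul h) (right_ne_zero_of_mul h)

theorem eqOn_seidovY_div : EqOn seidovY (fun x => seidovW x / x) (Ioo 0 √6) := by
  intro x hx
  change seidovY x = seidovW x / x
  rw [seidovY, seidovW, log_one_sub_sq_div_six (sq_ne_six_of_mem_Ioo hx)]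
  field_simp [hx.1.ne']
  ring

theorem hasDerivAt_seidovW (hx : x ^ 2 ≠ 6) : HasDerivAt seidovW (seidovW' x) x := by
  have hs : √6 ^ 2 = 6 := sq_sqrt (by norm_num)
  have hB := (((hasDerivAt_pow 2 x).div_const 6).const_sub 1).log
    (by contrapose! hx; linarith)
  have hA := hasDerivAt_log_one_add_div_sub_log_one_sub_div (by positivity) (hs ▸ hx)
  rw [hs] at hA
  have hP := (((hasDerivAt_pow 3 x).const_mul 5).div_const 18).sub
    ((hasDerivAt_id' x).const_mul 4)
  have hQ := ((hasDerivAt_id' x).const_mul 3).sub ((hasDerivAt_pow 3 x).div_const 6)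
  refine ((hP.add (hQ.mul hB)).add (hA.const_mul (2 * √6))).congr_deriv ?_
  have h6 : 6 - x ^ 2 ≠ 0 := sub_ne_zero.mpr hx.symm
  simp only [Pi.sub_apply, seidovW']
  field_simp
  linear_combination 864 * hs

theorem hasDerivAt_seidovW' (hx : x ^ 2 ≠ 6) :
    HasDerivAt seidovW' (-x * log (1 - x ^ 2 / 6)) x := by
  have h : 1 - x ^ 2 / 6 ≠ 0 := by contrapose! hx; linarith
  have hB := (((hasDerivAt_pow 2 x).div_const 6).const_sub 1).log h
  refine (((hasDerivAt_pow 2 x).div_const 2).add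
    ((((hasDerivAt_pow 2 x).div_const 2).const_sub 3).mul hB)).congr_deriv ?_
  field_simp
  ring

theorem tendsto_seidovY_nhdsGT_zero : Tendsto seidovY (𝓝[>] 0) (𝓝 0) := by
  have hw := (hasDerivAt_seidovW (x := 0) (by norm_num)).tendsto_div_nhdsNE_zero
    (by simp [seidovW])
  rw [show seidovW' 0 = 0 by simp [seidovW']] at hw
  refine (hw.mono_left (nhdsWithin_mono _ fun z hz => ne_of_gt hz)).congr' ?_
  filter_upwards [Ioo_mem_nhdsGT (by positivity : (0 : ℝ) < √6)] with x hx
  exact (eqOn_seidovY_div hx).symm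

theorem tendsto_deriv_seidovY_nhdsGT_zero : Tendsto (deriv seidovY) (𝓝[>] 0) (𝓝 0) := by
  have hsq : ∀ᶠ z in 𝓝 (0 : ℝ), z ^ 2 ≠ 6 :=
    (continuous_pow 2).continuousAt.eventually_ne (by norm_num)
  have hw'' : Tendsto (fun z : ℝ => -z * log (1 - z ^ 2 / 6)) (𝓝[>] 0) (𝓝 0) := by
    have : ContinuousAt (fun z : ℝ => -z * log (1 - z ^ 2 / 6)) 0 :=
      continuousAt_id.neg.mul (ContinuousAt.log (by fun_prop) (by norm_num))
    simpa using this.tendsto.mono_left nhdsWithin_le_nhds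
  have hlim := tendsto_mul_sub_div_sq_nhdsGT_zero (hsq.mono fun _ => hasDerivAt_seidovW)
    (hsq.mono fun _ => hasDerivAt_seidovW') hw'' (by simp [seidovW])
  rw [zero_div] at hlim
  refine hlim.congr' ?_
  filter_upwards [Ioo_mem_nhdsGT (by positivity : (0 : ℝ) < √6)] with x hx
  exact (hasDerivAt_of_eqOn_div isOpen_Ioo eqOn_seidovY_div hx hx.1.ne'
    (hasDerivAt_seidovW (sq_ne_six_of_mem_Ioo hx))).deriv.symm

theorem radialLaplacian_seidovY (hx : x ∈ Ioo 0 √6) :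
    radialLaplacian seidovY x = -log (1 - x ^ 2 / 6) := by
  rw [radialLaplacian_of_eqOn_div (w'' := fun z => -z * log (1 - z ^ 2 / 6)) isOpen_Ioo (by simp)
    eqOn_seidovY_div (fun z hz => hasDerivAt_seidovW (sq_ne_six_of_mem_Ioo hz))
    (hasDerivAt_seidovW' (sq_ne_six_of_mem_Ioo hx)) hx]
  field_simp [hx.1.ne']

end

/-- First-order delta expansion correction about `n = 0` (Seidov): the function
`y(x) = 5x²/18 − 4 + (3 − 2√6/x − x²/6)·ln(1 − x/√6) + (3 + 2√6/x − x²/6)·ln(1 + x/√6)`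
satisfies `y'' + (2/x)·y' = −ln(1 − x²/6)` on `(0, √6)`, with `y(x) → 0` and `y'(x) → 0`
as `x → 0⁺`. -/
theorem delta_expansion_first_order_n0_seidov :
    let y : ℝ → ℝ := fun x =>
      5 * x ^ 2 / 18 - 4
        + (3 - 2 * Real.sqrt 6 / x - x ^ 2 / 6) * Real.log (1 - x / Real.sqrt 6)
        + (3 + 2 * Real.sqrt 6 / x - x ^ 2 / 6) * Real.log (1 + x / Real.sqrt 6)
    (∀ x ∈ Set.Ioo (0 : ℝ) (Real.sqrt 6),
      deriv (deriv y) x + 2 / x * deriv y x = -Real.log (1 - x ^ 2 / 6)) ∧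
    Filter.Tendsto y (nhdsWithin 0 (Set.Ioi 0)) (nhds 0) ∧
    Filter.Tendsto (deriv y) (nhdsWithin 0 (Set.Ioi 0)) (nhds 0) :=
  ⟨fun _ hx => radialLaplacian_seidovY hx, tendsto_seidovY_nhdsGT_zero,
    tendsto_deriv_seidovY_nhdsGT_zero⟩
end
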